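/- arXiv:1602.08867 — 3 statements merged into one kernel-verified Lean document; each statement's English description precedes it below -/
import Mathlib

section
/- Let w be a word on an alphabet T and let A be a subset of T containing at least one letter of w. Then r(r(w)|A) = r(w|A), where both restrictions are defined since reduction does not change the set of letters occurring in a word. -/
/-- One-step reduction of words: either an adjacent equal pair `aa` is replaced
by `a`, or (for a word of length at least two whose first and last letters are
equal) the last letter is deleted. -/
def Step {S : Type*} (w v : List S) : Prop :=
  (∃ (u₁ : List S) (a : S) (u₂ : List S), w = u₁ ++ [a, a] ++ u₂ ∧ v = u₁ ++ [a] ++ u₂) ∨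
  (2 ≤ w.length ∧ w.head? = w.getLast? ∧ v = w.dropLast)

/-- A word is reduced if it has no two equal adjacent letters and either has
length one or has different first and last letters. -/
def Reduced {S : Type*} (w : List S) : Prop :=
  w.Chain' (· ≠ ·) ∧ (w.length = 1 ∨ w.head? ≠ w.getLast?)

/-- `IsReduction w u` : the reduced word `u` is obtainable from `w` by a finite
(possibly empty) sequence of one-step reductions, i.e. `u = r(w)`. -/
def IsReduction {S : Type*} (w u : List S) : Prop :=
  Relation.ReflTransGen Step w u ∧ Reduced u

open Classical in
/-- The restriction `w|A` of a word to a sub-alphabet `A`: delete all letters not in `A`. -/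
noncomputable def restrictWord {S : Type*} (w : List S) (A : Set S) : List S :=
  w.filter fun a => decide (a ∈ A)

/-- A word is crossing if it contains the pattern `… a … b … a … b …` with `a ≠ b`. -/
def Crossing {S : Type*} (w : List S) : Prop :=
  ∃ (i j k l : ℕ) (hij : i < j) (hjk : j < k) (hkl : k < l) (hl : l < w.length),
    w[i]'(by omega) = w[k]'(by omega) ∧ w[j]'(by omega) = w[l]'hl ∧
    w[i]'(by omega) ≠ w[j]'(by omega)

/-! The proof goes through an explicit normal form: destutter the word, then delete its last
letter if it equals the first. Each one-step reduction preserves this normal form and a reduced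
word is its own normal form, so `r(w)` is the normal form of `w`; in particular reductions are
unique. Restricting to `A` sends every one-step reduction either to a one-step reduction or to
the identity, so `w|A` reduces to `r(w)|A`, and both sides of the identity are the normal form
of `w|A`. -/

namespace List

variable {α : Type*}

theorem head?_destutter' (R : α → α → Prop) [DecidableRel R] (a : α) (l : List α) :
    (l.destutter' R a).head? = some a := by
  induction l generalizing a with
  | nil => rfl
  | cons b l ih => rw [destutter'_cons]; split <;> simp [ih]

theorem destutter'_append_cons_cons {R : α → α → Prop} [DecidableRel R] {a : α} (ha : ¬R a a)
    (l₁ l₂ : List α) (x : α) :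
    (l₁ ++ a :: a :: l₂).destutter' R x = (l₁ ++ a :: l₂).destutter' R x := by
  induction l₁ generalizing x with
  | nil => simp only [nil_append, destutter'_cons, ha, if_false]; split <;> rfl
  | cons b l₁ ih => simp only [cons_append, destutter'_cons, ih]

variable [DecidableEq α]

theorem getLast?_destutter'_ne (a : α) (l : List α) :
    (l.destutter' (· ≠ ·) a).getLast? = (a :: l).getLast? := by
  induction l generalizing a with
  | nil => rfl
  | cons b l ih =>
    rw [destutter'_cons, getLast?_cons_cons]
    split_ifs with h
    · rw [getLast?_cons, ih, getLast?_cons, Option.getD_some]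
    · rw [not_not.mp h, ih]

theorem destutter'_ne_append_singleton (a y : α) (l : List α) :
    (l ++ [y]).destutter' (· ≠ ·) a =
      if (a :: l).getLast? = some y then l.destutter' (· ≠ ·) a
      else l.destutter' (· ≠ ·) a ++ [y] := by
  induction l generalizing a with
  | nil => by_cases h : a = y <;> simp [h]
  | cons b l ih =>
    simp only [cons_append, destutter'_cons, ih, getLast?_cons_cons]
    split <;> split <;> simp_all

end List

open List

section Step

variable {S : Type*}

theorem step_pair (u₁ u₂ : List S) (a : S) : Step (u₁ ++ a :: a :: u₂) (u₁ ++ a :: u₂) :=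
  .inl ⟨u₁, a, u₂, by simp, by simp⟩

theorem step_wrap (b : S) (s : List S) : Step (b :: s ++ [b]) (b :: s) :=
  .inr ⟨by simp, by rw [getLast?_concat, cons_append, head?_cons], dropLast_concat.symm⟩

theorem eq_pair_or_eq_wrap_of_step {w v : List S} (h : Step w v) :
    (∃ u₁ a u₂, w = u₁ ++ a :: a :: u₂ ∧ v = u₁ ++ a :: u₂) ∨
      ∃ b s, w = b :: s ++ [b] ∧ v = b :: s := by
  rcases h with ⟨u₁, a, u₂, rfl, rfl⟩ | ⟨hlen, hends, rfl⟩
  · exact .inl ⟨u₁, a, u₂, by simp, by simp⟩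
  · right
    obtain _ | ⟨b, t⟩ := w
    · simp at hlen
    obtain rfl | ⟨s, c, rfl⟩ := t.eq_nil_or_concat
    · simp at hlen
    rw [concat_eq_append, ← cons_append] at hends ⊢
    rw [getLast?_concat, cons_append, head?_cons, Option.some.injEq] at hends
    exact ⟨b, s, by rw [hends], by rw [dropLast_concat]⟩

theorem step_filter_or_eq {w v : List S} (h : Step w v) (p : S → Bool) :
    Step (w.filter p) (v.filter p) ∨ w.filter p = v.filter p := by
  rcases eq_pair_or_eq_wrap_of_step h with ⟨u₁, a, u₂, rfl, rfl⟩ | ⟨b, s, rfl, rfl⟩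
  · by_cases hp : p a
    · left; simpa [filter_append, hp] using step_pair (u₁.filter p) (u₂.filter p) a
    · right; simp [filter_append, hp]
  · by_cases hp : p b
    · left; simpa [filter_append, hp] using step_wrap b (s.filter p)
    · right; simp [filter_append, hp]

theorem reflTransGen_step_filter {w v : List S} (h : Relation.ReflTransGen Step w v)
    (p : S → Bool) : Relation.ReflTransGen Step (w.filter p) (v.filter p) := by
  induction h with
  | refl => exact .refl
  | tail _ hstep ih => exact (step_filter_or_eq hstep p).elim ih.tail (· ▸ ih)

end Step

section ReduceWord

variable {S : Type*} [DecidableEq S]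

def trimWrap (d : List S) : List S :=
  if 2 ≤ d.length ∧ d.head? = d.getLast? then d.dropLast else d

theorem trimWrap_eq_self {d : List S} (h : d.length = 1 ∨ d.head? ≠ d.getLast?) :
    trimWrap d = d := by
  rw [trimWrap, if_neg]
  rintro ⟨hlen, hends⟩
  exact h.elim (by omega) (· hends)

theorem trimWrap_append_singleton {d : List S} {b : S} (hd : d.head? = some b) :
    trimWrap (d ++ [b]) = d := by
  obtain _ | ⟨c, d⟩ := d
  · simp at hd
  · obtain rfl : c = b := by simpa using hd
    rw [trimWrap, if_pos ⟨by simp, by rw [getLast?_concat, cons_append, head?_cons]⟩,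
      dropLast_concat]

def reduceWord (w : List S) : List S :=
  trimWrap (w.destutter (· ≠ ·))

theorem reduceWord_eq_of_step {w v : List S} (h : Step w v) : reduceWord w = reduceWord v := by
  rcases eq_pair_or_eq_wrap_of_step h with ⟨u₁, a, u₂, rfl, rfl⟩ | ⟨b, s, rfl, rfl⟩
  · obtain _ | ⟨c, u₁⟩ := u₁
    · simp [reduceWord, destutter_cons']
    · simp only [reduceWord, cons_append, destutter_cons',
        destutter'_append_cons_cons (R := (· ≠ ·)) (not_not.mpr rfl)]
  · simp only [reduceWord, cons_append, destutter_cons', destutter'_ne_append_singleton]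
    split_ifs with hlast
    · rfl
    · rw [trimWrap_append_singleton (head?_destutter' _ b s), trimWrap_eq_self (.inr ?_)]
      rw [head?_destutter', getLast?_destutter'_ne]
      exact Ne.symm hlast

theorem reduceWord_eq_of_reduced {u : List S} (h : Reduced u) : reduceWord u = u := by
  rw [reduceWord, destutter_of_isChain _ u h.1, trimWrap_eq_self h.2]

theorem reduceWord_eq_of_reflTransGen {w v : List S} (h : Relation.ReflTransGen Step w v) :
    reduceWord w = reduceWord v := by
  induction h with
  | refl => rfl
  | tail _ hstep ih => exact ih.trans (reduceWord_eq_of_step hstep)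

theorem eq_reduceWord_of_isReduction {w u : List S} (h : IsReduction w u) : u = reduceWord w := by
  rw [reduceWord_eq_of_reflTransGen h.1, reduceWord_eq_of_reduced h.2]

end ReduceWord

theorem reduce_restrict_reduce_general {T : Type*} (w : List T) (A : Set T)
    (u x y : List T)
    (hu : IsReduction w u)
    (hx : IsReduction (restrictWord u A) x)
    (hy : IsReduction (restrictWord w A) y) :
    x = y := by
  classical
  have hrestrict : Relation.ReflTransGen Step (restrictWord w A) (restrictWord u A) :=
    reflTransGen_step_filter hu.1 _
  rw [eq_reduceWord_of_isReduction hx, eq_reduceWord_of_isReduction hy,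
    reduceWord_eq_of_reflTransGen hrestrict]

/-- Lemma 1.8 (reduce–restrict–reduce): for a word `w` on `T` and a subset `A`
of `T` containing at least one letter of `w`, `r(r(w)|A) = r(w|A)`. -/
theorem reduce_restrict_reduce {T : Type*} (w : List T) (hw : w ≠ []) (A : Set T)
    (hA : ∃ a ∈ w, a ∈ A)
    (u x y : List T)
    (hu : IsReduction w u)
    (hx : IsReduction (restrictWord u A) x)
    (hy : IsReduction (restrictWord w A) y) :
    x = y :=
  reduce_restrict_reduce_general w A u x y hu hx hy
end

section
/- If a word w on an alphabet S is crossing, then its reduction r(w) is crossing. Equivalently, if r(w) is non-crossing then w is non-crossing. -/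
/-! A word is crossing exactly when it contains `[a, b, a, b]` with `a ≠ b` as a subsequence, so it
suffices that each one-step reduction keeps such a subsequence. Since the pattern has no two equal
adjacent letters, it uses at most one letter of a pair `cc`, so collapsing `cc` to `c` keeps it. If
the last letter is deleted and the pattern ends there, that letter also stands at the front of the
word, and the rotated pattern `[b, a, b, a]` survives. -/

namespace List

variable {α : Type*}

theorem IsChain.sublist_of_sublist_append_pair_append {p l r : List α} {c : α}
    (hp : p.IsChain (· ≠ ·)) (h : p <+ l ++ [c, c] ++ r) : p <+ l ++ [c] ++ r := by
  induction l generalizing p with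
  | nil =>
    rcases sublist_cons_iff.1 h with h | ⟨q, rfl, hq⟩
    · exact h
    · rcases sublist_cons_iff.1 hq with hq | ⟨q', rfl, -⟩
      · exact hq.cons_cons c
      · exact absurd rfl (isChain_cons_cons.1 hp).1
  | cons x l ih =>
    rcases sublist_cons_iff.1 h with h | ⟨q, rfl, hq⟩
    · exact (ih hp h).cons x
    · exact (ih hp.tail hq).cons_cons x

end List

section

open List

variable {S : Type*}

theorem crossing_iff_exists_sublist {w : List S} :
    Crossing w ↔ ∃ a b : S, a ≠ b ∧ [a, b, a, b] <+ w := by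
  constructor
  · rintro ⟨i, j, k, l, hij, hjk, hkl, hl, hik, hjl, hne⟩
    refine ⟨_, _, hne, sublist_iff_exists_fin_orderEmbedding_get_eq.2
      ⟨OrderEmbedding.ofStrictMono ![⟨i, by omega⟩, ⟨j, by omega⟩, ⟨k, by omega⟩, ⟨l, hl⟩] ?_, ?_⟩⟩
    · refine Fin.strictMono_iff_lt_succ.2 fun m => ?_
      fin_cases m <;> simpa
    · intro m
      fin_cases m <;> simp [hik, hjl]
  · rintro ⟨a, b, hab, hsub⟩
    obtain ⟨f, hf⟩ := sublist_iff_exists_fin_orderEmbedding_get_eq.1 hsub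
    have h0 : a = w[f 0] := hf 0
    have h1 : b = w[f 1] := hf 1
    have h2 : a = w[f 2] := hf 2
    have h3 : b = w[f 3] := hf 3
    exact ⟨f 0, f 1, f 2, f 3, f.strictMono (Fin.lt_def.2 (by simp)),
      f.strictMono (Fin.lt_def.2 (by simp)), f.strictMono (Fin.lt_def.2 (by simp)),
      (f 3).2, h0.symm.trans h2, h1.symm.trans h3, h0 ▸ h1 ▸ hab⟩

theorem Crossing.collapse_pair {l r : List S} {c : S} (h : Crossing (l ++ [c, c] ++ r)) :
    Crossing (l ++ [c] ++ r) := by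
  obtain ⟨a, b, hab, hsub⟩ := crossing_iff_exists_sublist.1 h
  have hchain : [a, b, a, b].IsChain (· ≠ ·) := by simp [hab, hab.symm]
  exact crossing_iff_exists_sublist.2
    ⟨a, b, hab, hchain.sublist_of_sublist_append_pair_append hsub⟩

theorem Crossing.drop_repeated_last {v : List S} {c : S} (h : Crossing (c :: v ++ [c])) :
    Crossing (c :: v) := by
  obtain ⟨a, b, hab, hsub⟩ := crossing_iff_exists_sublist.1 h
  obtain ⟨l₁, l₂, hsplit, h₁, h₂⟩ := sublist_append_iff.1 hsub
  rcases sublist_singleton.1 h₂ with rfl | rfl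
  · rw [append_nil] at hsplit
    exact crossing_iff_exists_sublist.2 ⟨a, b, hab, hsplit ▸ h₁⟩
  · have hsplit' : l₁ ++ [c] = [a, b, a] ++ [b] := hsplit.symm
    obtain ⟨rfl, hcb⟩ := append_inj' hsplit' rfl
    obtain rfl : c = b := by simpa using hcb
    have h₁' : [a, c, a] <+ v := by
      rcases sublist_cons_iff.1 h₁ with h₁' | ⟨r, hr, -⟩
      · exact h₁'
      · exact absurd (cons_eq_cons.1 hr).1 hab
    exact crossing_iff_exists_sublist.2 ⟨c, a, hab.symm, h₁'.cons_cons c⟩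

theorem Step.crossing {w v : List S} (h : Step w v) (hc : Crossing w) : Crossing v := by
  rcases h with ⟨l, c, r, rfl, rfl⟩ | ⟨hlen, hends, rfl⟩
  · exact hc.collapse_pair
  · obtain rfl | ⟨_ | ⟨c, u⟩, d, rfl⟩ := eq_nil_or_concat' w
    · simp at hlen
    · simp at hlen
    · rw [getLast?_concat] at hends
      obtain rfl : c = d := by simpa using hends
      rw [dropLast_concat]
      exact hc.drop_repeated_last

end

theorem crossing_reduction_general {S : Type*} (w u : List S)
    (hu : IsReduction w u) (hc : Crossing w) : Crossing u := by
  obtain ⟨hreduces, -⟩ := hu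
  induction hreduces with
  | refl => exact hc
  | tail _ hstep ih => exact hstep.crossing ih

/-- If a word is crossing, so is its reduction. -/
theorem crossing_reduction {S : Type*} (w u : List S) (hw : w ≠ [])
    (hu : IsReduction w u) (hc : Crossing w) : Crossing u :=
  crossing_reduction_general w u hu hc
end

section
/- Let K be a field of characteristic zero, let V be a unital associative K-algebra, and let E : V → K be a K-linear map with E(1) = 1. Then there exists a unique family of multilinear maps κ_n : Vⁿ → K (one for each n ≥ 1) such that for every N ≥ 1 and all a_1, …, a_N ∈ V, E(a_1 ⋯ a_N) equals the sum, over all non-crossing partitions f of N (of any size k), of the products ∏_{i=1}^{k} κ_{|f⁻¹(i)|}(a_{j_1}, …, a_{j_m}), where j_1 < ⋯ < j_m is the increasing enumeration of f⁻¹(i). -/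
open scoped BigOperators

/-- A non-crossing partition of `{1, …, N}` (modelled as `Fin N`) of size `k`:
a surjection `f : Fin N → Fin k` such that (ordering) `i < j` implies
`min f⁻¹(i) < min f⁻¹(j)`, and (non-crossing) there are no indices
`p < q < r < s` with `f p = f r`, `f q = f s` and `f p ≠ f q`. -/
def IsNCPartition {N k : ℕ} (f : Fin N → Fin k) : Prop :=
  Function.Surjective f ∧
  (∀ i j : Fin k, i < j →
    (Finset.univ.filter fun p => f p = i).min < (Finset.univ.filter fun p => f p = j).min) ∧
  ¬ ∃ p q r s : Fin N, p < q ∧ q < r ∧ r < s ∧ f p = f r ∧ f q = f s ∧ f p ≠ f q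

open Classical in
/-- The moment–cumulant relation of free probability: a family `κ` of
multilinear functionals satisfies it when, for every `N ≥ 1` and all
`a₁, …, a_N`, the expectation `E(a₁ ⋯ a_N)` is the sum over all non-crossing
partitions `f` of `{1, …, N}` (of any size `k`) of the products over the blocks
`f⁻¹(i)` of `κ_{|f⁻¹(i)|}` evaluated at the letters of the block, listed in
increasing order of their indices. -/
noncomputable def FreeMomentCumulantFormula (K V : Type*) [Field K] [Ring V] [Algebra K V]
    (E : V →ₗ[K] K) (κ : ∀ n : ℕ, MultilinearMap K (fun _ : Fin n => V) K) : Prop :=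
  ∀ N : ℕ, 1 ≤ N → ∀ a : Fin N → V,
    E (List.ofFn a).prod =
      ∑ k ∈ Finset.Icc 1 N,
        ∑ f ∈ Finset.univ.filter (fun f : Fin N → Fin k => IsNCPartition f),
          ∏ i : Fin k,
            κ (Finset.univ.filter fun p => f p = i).card
              (fun q => a ((Finset.univ.filter fun p => f p = i).orderIsoOfFin rfl q))

/-! The moment–cumulant relation is triangular: the one-block partition contributes
`κ_N (a₁, …, a_N)` itself, while every block of any other partition has fewer than `N`
elements. So `κ_N := E(a₁ ⋯ a_N) − ∑_{≥ 2 blocks} ∏ κ` defines the cumulants recursively, and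
the same triangularity gives uniqueness by strong induction. The product over the blocks is
multilinear because it is the product map composed with the `κ`'s of the fibres of `f`,
reindexed along `Σ i, f⁻¹(i) ≃ Fin N`. -/

namespace FreeCumulant

open Finset

section BlockProd

variable {R M : Type*} [CommSemiring R] [AddCommMonoid M] [Module R M]

def fiberSigmaEquiv {N k : ℕ} (f : Fin N → Fin k) :
    (Σ i : Fin k, Fin (univ.filter fun p => f p = i).card) ≃ Fin N :=
  (Equiv.sigmaCongrRight fun i =>
    ((univ.filter fun p => f p = i).orderIsoOfFin rfl).toEquiv.trans
      (Equiv.subtypeEquivRight fun p => by simp)).trans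
    (Equiv.sigmaFiberEquiv f)

def blockProd (κ : ∀ n : ℕ, MultilinearMap R (fun _ : Fin n => M) R) {N k : ℕ}
    (f : Fin N → Fin k) : MultilinearMap R (fun _ : Fin N => M) R :=
  ((MultilinearMap.mkPiAlgebra R (Fin k) R).compMultilinearMap
    fun i => κ (univ.filter fun p => f p = i).card).domDomCongr (fiberSigmaEquiv f)

theorem blockProd_apply (κ : ∀ n : ℕ, MultilinearMap R (fun _ : Fin n => M) R) {N k : ℕ}
    (f : Fin N → Fin k) (a : Fin N → M) :
    blockProd κ f a = ∏ i : Fin k, κ (univ.filter fun p => f p = i).card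
      (fun q => a ((univ.filter fun p => f p = i).orderIsoOfFin rfl q)) :=
  rfl

theorem blockProd_congr {κ κ' : ∀ n : ℕ, MultilinearMap R (fun _ : Fin n => M) R} {N k : ℕ}
    (f : Fin N → Fin k)
    (h : ∀ i, κ (univ.filter fun p => f p = i).card = κ' (univ.filter fun p => f p = i).card) :
    blockProd κ f = blockProd κ' f :=
  MultilinearMap.ext fun a => by simp only [blockProd_apply, h]

theorem apply_orderEmbOfFin_univ (κ : ∀ n : ℕ, MultilinearMap R (fun _ : Fin n => M) R)
    {N : ℕ} (s : Finset (Fin N)) (hs : s = univ) (a : Fin N → M) :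
    κ s.card (fun q => a (s.orderEmbOfFin rfl q)) = κ N a := by
  subst hs
  -- `#univ = N` holds only propositionally, so the arity is generalized before identifying it
  suffices ∀ m (h : (univ : Finset (Fin N)).card = m),
      κ m (fun q => a (univ.orderEmbOfFin h q)) = κ N a from this _ rfl
  intro m h
  obtain rfl : m = N := h.symm.trans (card_fin N)
  rw [← orderEmbOfFin_unique h (fun x => mem_univ x) strictMono_id]

theorem blockProd_fin_one (κ : ∀ n : ℕ, MultilinearMap R (fun _ : Fin n => M) R) {N : ℕ}
    (f : Fin N → Fin 1) : blockProd κ f = κ N :=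
  MultilinearMap.ext fun a => by
    rw [blockProd_apply, Fin.prod_univ_one]
    exact apply_orderEmbOfFin_univ κ _ (filter_true_of_mem fun p _ => Subsingleton.elim _ _) a

end BlockProd

theorem card_fiber_pos {N k : ℕ} {f : Fin N → Fin k} (hf : Function.Surjective f) (i : Fin k) :
    0 < (univ.filter fun p => f p = i).card :=
  let ⟨p, hp⟩ := hf i
  card_pos.2 ⟨p, by simp [hp]⟩

theorem card_fiber_lt {N k : ℕ} {f : Fin N → Fin k} (hf : Function.Surjective f) (hk : 2 ≤ k)
    (i : Fin k) : (univ.filter fun p => f p = i).card < N := by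
  obtain ⟨j, hji⟩ := Fintype.exists_ne_of_one_lt_card (by rwa [Fintype.card_fin]) i
  obtain ⟨p, rfl⟩ := hf j
  simpa using card_lt_card (filter_ssubset.2 ⟨p, mem_univ p, hji⟩)

theorem isNCPartition_fin_one {N : ℕ} (hN : 1 ≤ N) (f : Fin N → Fin 1) : IsNCPartition f :=
  ⟨fun i => ⟨⟨0, hN⟩, Subsingleton.elim _ _⟩,
    fun i j hij => absurd hij (by simp [Subsingleton.elim i j]),
    fun ⟨_, _, _, _, _, _, _, _, _, hne⟩ => hne (Subsingleton.elim _ _)⟩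

section Inversion

variable {R M : Type*} [CommRing R] [AddCommMonoid M] [Module R M]

open Classical in
noncomputable def ncPartitionSum (κ : ∀ n : ℕ, MultilinearMap R (fun _ : Fin n => M) R)
    (minBlocks N : ℕ) : MultilinearMap R (fun _ : Fin N => M) R :=
  ∑ k ∈ Icc minBlocks N, ∑ f ∈ univ.filter (fun f : Fin N → Fin k => IsNCPartition f),
    blockProd κ f

theorem ncPartitionSum_one_eq (κ : ∀ n : ℕ, MultilinearMap R (fun _ : Fin n => M) R) {N : ℕ}
    (hN : 1 ≤ N) :
    ncPartitionSum κ 1 N = κ N + ncPartitionSum κ 2 N := by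
  classical
  rw [ncPartitionSum, ← insert_Icc_add_one_left_eq_Icc hN, sum_insert (by simp)]
  congr 1
  simp [isNCPartition_fin_one hN, blockProd_fin_one]

theorem ncPartitionSum_two_congr {κ κ' : ∀ n : ℕ, MultilinearMap R (fun _ : Fin n => M) R}
    {N : ℕ} (h : ∀ m, 1 ≤ m → m < N → κ m = κ' m) :
    ncPartitionSum κ 2 N = ncPartitionSum κ' 2 N := by
  classical
  refine sum_congr rfl fun k hk => sum_congr rfl fun f hf => blockProd_congr f fun i => ?_
  have hf := (mem_filter.1 hf).2.1
  exact h _ (card_fiber_pos hf i) (card_fiber_lt hf (mem_Icc.1 hk).1 i)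

noncomputable def cumulant (φ : ∀ n : ℕ, MultilinearMap R (fun _ : Fin n => M) R) (N : ℕ) :
    MultilinearMap R (fun _ : Fin N => M) R :=
  -- truncating to arities `< N` makes the recursion well founded and changes nothing, since
  -- a partition with at least two blocks has only blocks of size `< N`
  φ N - ncPartitionSum (fun m => if m < N then cumulant φ m else 0) 2 N
termination_by N

theorem ncPartitionSum_cumulant (φ : ∀ n : ℕ, MultilinearMap R (fun _ : Fin n => M) R) {N : ℕ}
    (hN : 1 ≤ N) : ncPartitionSum (cumulant φ) 1 N = φ N := by
  rw [ncPartitionSum_one_eq _ hN, cumulant,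
    ncPartitionSum_two_congr (κ' := cumulant φ) fun m _ hm => if_pos hm, sub_add_cancel]

theorem eq_of_ncPartitionSum_eq {κ κ' : ∀ n : ℕ, MultilinearMap R (fun _ : Fin n => M) R}
    (h : ∀ N, 1 ≤ N → ncPartitionSum κ 1 N = ncPartitionSum κ' 1 N) :
    ∀ n, 1 ≤ n → κ n = κ' n := by
  intro n
  induction n using Nat.strong_induction_on with
  | _ n ih =>
    intro hn
    have := h n hn
    rwa [ncPartitionSum_one_eq _ hn, ncPartitionSum_one_eq _ hn,
      ncPartitionSum_two_congr fun m hm hmn => ih m hmn hm, add_left_inj] at this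

end Inversion

theorem freeMomentCumulantFormula_iff {K V : Type*} [Field K] [Ring V] [Algebra K V]
    (E : V →ₗ[K] K) (κ : ∀ n : ℕ, MultilinearMap K (fun _ : Fin n => V) K) :
    FreeMomentCumulantFormula K V E κ ↔
      ∀ N, 1 ≤ N → ncPartitionSum κ 1 N = E.compMultilinearMap (.mkPiAlgebraFin K N V) := by
  refine forall₂_congr fun N _ => ?_
  rw [eq_comm, MultilinearMap.ext_iff]
  simp [ncPartitionSum, blockProd_apply]

end FreeCumulant

theorem free_cumulants_exist_unique_general (K V : Type*) [Field K]
    [Ring V] [Algebra K V] (E : V →ₗ[K] K) :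
    ∃ κ : ∀ n : ℕ, MultilinearMap K (fun _ : Fin n => V) K,
      FreeMomentCumulantFormula K V E κ ∧
      ∀ κ' : ∀ n : ℕ, MultilinearMap K (fun _ : Fin n => V) K,
        FreeMomentCumulantFormula K V E κ' → ∀ n : ℕ, 1 ≤ n → κ n = κ' n := by
  simp only [FreeCumulant.freeMomentCumulantFormula_iff]
  set φ := fun N => E.compMultilinearMap (MultilinearMap.mkPiAlgebraFin K N V)
  refine ⟨FreeCumulant.cumulant φ, fun N hN => FreeCumulant.ncPartitionSum_cumulant φ hN,
    fun κ' hκ' => FreeCumulant.eq_of_ncPartitionSum_eq fun N hN => ?_⟩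
  rw [FreeCumulant.ncPartitionSum_cumulant φ hN, hκ' N hN]

/-- Existence and uniqueness of free cumulants: for a non-commutative
probability space `(V, E)` over a field `K` of characteristic zero, there is a
unique family of multilinear maps `κ_n : Vⁿ → K` (`n ≥ 1`) whose multiplicative
extension over non-crossing partitions satisfies the defining moment–cumulant
equation. -/
theorem free_cumulants_exist_unique (K V : Type*) [Field K] [CharZero K]
    [Ring V] [Algebra K V] (E : V →ₗ[K] K) (hE : E 1 = 1) :
    ∃ κ : ∀ n : ℕ, MultilinearMap K (fun _ : Fin n => V) K,
      FreeMomentCumulantFormula K V E κ ∧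
      ∀ κ' : ∀ n : ℕ, MultilinearMap K (fun _ : Fin n => V) K,
        FreeMomentCumulantFormula K V E κ' → ∀ n : ℕ, 1 ≤ n → κ n = κ' n :=
  free_cumulants_exist_unique_general K V E
end
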